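/- arXiv:1512.00766 — 3 statements merged into one kernel-verified Lean document; each statement's English description precedes it below -/
import Mathlib

section
/- The second-order partial derivative ∂²IMM_q^n / (∂(x_β)^r_s ∂(x_α)^j_k) equals: 0 if α = β; 0 if β = α−1 and k ≠ r; 0 if β = α+1 and s ≠ j; the (j,s)-entry of X_{α−2}···X_1 X_n···X_{α+1} if β = α−1 and k = r; the (r,k)-entry of X_{α−1}···X_1 X_n···X_{α+2} if β = α+1 and s = j; and (X_{α−1}···X_{β+1})^k_r · (X_{β−1}···X_{α+1})^s_j if β ∉ {α, α−1, α+1}. -/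
/-!
Every monomial of `IMM` contains exactly one variable of each block `X_γ`, so `∂/∂(x_α)^j_k`
just replaces `X_α` by the matrix unit `E_jk`; a second derivative in the same block kills the
resulting constant block, while for `β ≠ α` it replaces `X_β` by `E_rs` as well. Evaluated, the
second derivative is the trace of the cyclic product with `E_jk` and `E_rs` inserted. Rotating
the product to start at `α`, this is `tr (E_jk A E_rs B) = A^k_r B^s_j`, where `A` and `B` are
the two cyclic segments of `X_•` strictly between `α` and `β`.
-/

open MvPolynomial

/-- The iterated matrix multiplication polynomial `IMM_q^n`: `trace (Xₙ ⋯ X₁)`,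
in variables `(α, i, j)` standing for the `(i,j)`-entry of `X_α`. -/
noncomputable def IMM (q n : ℕ) [NeZero n] : MvPolynomial (Fin n × Fin q × Fin q) ℂ :=
  ∑ ℓ : Fin n → Fin q, ∏ α : Fin n, X (α, ℓ (α + 1), ℓ α)

/-- A point of `(Mat_q)^n` read off from a point of the variable space. -/
def toMat {q n : ℕ} (v : Fin n × Fin q × Fin q → ℂ) (β : Fin n) : Matrix (Fin q) (Fin q) ℂ :=
  Matrix.of fun a b => v (β, a, b)

/-- The cyclic segment product `X_a X_{a-1} ⋯ X_b` (indices descending cyclically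
from `a` to `b`). -/
noncomputable def segProd {q : ℕ} (n : ℕ) [NeZero n] (M : Fin n → Matrix (Fin q) (Fin q) ℂ)
    (a b : Fin n) : Matrix (Fin q) (Fin q) ℂ :=
  (List.ofFn (fun k : Fin (((a - b : Fin n) : ℕ) + 1) => M (a - Fin.ofNat n (k : ℕ)))).prod

open Fin.NatCast Fin.CommRing Matrix Function Finset

theorem Fin.snoc_zero_succ {ι : Type*} {m : ℕ} (ℓ : Fin (m + 1) → ι) (t : Fin (m + 1)) :
    Fin.snoc (α := fun _ => ι) ℓ (ℓ 0) t.succ = ℓ (t + 1) := by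
  induction t using Fin.lastCases with
  | last => simp
  | cast t => rw [Fin.succ_castSucc, Fin.snoc_castSucc, Fin.coeSucc_eq_succ]

theorem Fin.sub_natCast_eq_sub_natCast_iff {n : ℕ} [NeZero n] (a : Fin n) {i i' : ℕ}
    (hi : i < n) (hi' : i' < n) : a - (i : Fin n) = a - (i' : Fin n) ↔ i = i' := by
  rw [sub_right_inj, Fin.ext_iff, Fin.val_cast_of_lt hi, Fin.val_cast_of_lt hi']

theorem Fin.exists_eq_sub_natCast_succ {n : ℕ} [NeZero n] {α β : Fin n} (h : β ≠ α) :
    ∃ m₁ m₂ : ℕ, m₁ + m₂ + 2 = n ∧ β = α - (m₁ + 1 : ℕ) := by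
  have hd : (α - β).val ≠ 0 := by
    rwa [Ne, Fin.val_eq_zero_iff, sub_eq_zero, eq_comm]
  refine ⟨(α - β).val - 1, n - 1 - (α - β).val, by omega, ?_⟩
  rw [Nat.sub_add_cancel (Nat.pos_of_ne_zero hd), Fin.cast_val_eq_self, sub_sub_cancel]

theorem Derivation.map_prod_eq_prod_update {R A κ : Type*} [CommSemiring R] [CommSemiring A]
    [Algebra R A] [Fintype κ] [DecidableEq κ] (D : Derivation R A A) (p : κ → A) (α : κ)
    (h : ∀ γ ≠ α, D (p γ) = 0) :
    D (∏ γ, p γ) = ∏ γ, update p α (D (p α)) γ := by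
  have hrest : D (∏ γ ∈ univ.erase α, p γ) = 0 :=
    prod_induction _ (fun x => D x = 0)
      (fun x y hx hy => by rw [D.leibniz, hx, hy, smul_zero, smul_zero, add_zero])
      D.map_one_eq_zero (fun γ hγ => h γ (ne_of_mem_erase hγ))
  rw [← mul_prod_erase univ p (mem_univ α), D.leibniz, hrest, smul_zero, zero_add, smul_eq_mul,
    prod_update_of_mem (mem_univ α), sdiff_singleton_eq_erase, mul_comm]

section CycleSum

variable {n : ℕ} [NeZero n] {ι R : Type*} [Fintype ι] [CommSemiring R]

def cycleSum (M : Fin n → Matrix ι ι R) : R :=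
  ∑ ℓ : Fin n → ι, ∏ γ, M γ (ℓ (γ + 1)) (ℓ γ)

theorem RingHom.map_cycleSum {S : Type*} [CommSemiring S] (f : R →+* S)
    (M : Fin n → Matrix ι ι R) :
    f (cycleSum M) = cycleSum fun γ => (M γ).map f := by
  simp [cycleSum, map_sum, map_prod]

theorem cycleSum_update_zero (M : Fin n → Matrix ι ι R) (α : Fin n) :
    cycleSum (update M α 0) = 0 :=
  sum_eq_zero fun ℓ _ => prod_eq_zero (mem_univ α) (by simp)

theorem Derivation.map_cycleSum {A : Type*} [CommSemiring A] [Algebra R A]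
    (D : Derivation R A A) (M : Fin n → Matrix ι ι A) (α : Fin n)
    (h : ∀ γ ≠ α, ∀ a b, D (M γ a b) = 0) :
    D (cycleSum M) = cycleSum (update M α ((M α).map D)) := by
  rw [cycleSum, map_sum]
  refine sum_congr rfl fun ℓ _ => ?_
  rw [D.map_prod_eq_prod_update _ α fun γ hγ => h γ hγ _ _]
  refine prod_congr rfl fun γ _ => ?_
  rcases eq_or_ne γ α with rfl | hγ <;> simp [update_of_ne, *]

end CycleSum

section DescProd

variable {n : ℕ} [NeZero n] {ι R : Type*} [Fintype ι] [DecidableEq ι] [CommSemiring R]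

def descProd (M : Fin n → Matrix ι ι R) : Fin n → ℕ → Matrix ι ι R
  | _, 0 => 1
  | a, m + 1 => M a * descProd M (a - 1) m

theorem descProd_zero (M : Fin n → Matrix ι ι R) (a : Fin n) : descProd M a 0 = 1 := rfl

theorem descProd_succ (M : Fin n → Matrix ι ι R) (a : Fin n) (m : ℕ) :
    descProd M a (m + 1) = M a * descProd M (a - 1) m := rfl

theorem descProd_one (M : Fin n → Matrix ι ι R) (a : Fin n) : descProd M a 1 = M a := mul_one _

theorem descProd_add (M : Fin n → Matrix ι ι R) (a : Fin n) (m₁ m₂ : ℕ) :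
    descProd M a (m₁ + m₂) = descProd M a m₁ * descProd M (a - m₁) m₂ := by
  induction m₁ generalizing a with
  | zero => simp [descProd_zero]
  | succ m ih =>
    rw [add_right_comm, descProd_succ, ih, descProd_succ, mul_assoc, sub_sub, Nat.cast_succ,
      add_comm (1 : Fin n)]

theorem descProd_congr {M N : Fin n → Matrix ι ι R} {a : Fin n} {m : ℕ}
    (h : ∀ i < m, M (a - i) = N (a - i)) : descProd M a m = descProd N a m := by
  induction m generalizing a with
  | zero => rfl
  | succ m ih =>
    rw [descProd_succ, descProd_succ, ih fun i hi => ?_]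
    · simpa using congrArg (· * descProd N (a - 1) m) (h 0 m.succ_pos)
    · simpa [sub_sub, add_comm] using h (i + 1) (by omega)

theorem descProd_apply (M : Fin n → Matrix ι ι R) (a : Fin n) (m : ℕ) (x y : ι) :
    descProd M a m x y = ∑ g : Fin (m + 1) → ι,
      if g 0 = x ∧ g (Fin.last m) = y then
        ∏ t : Fin m, M (a - (t : ℕ)) (g t.castSucc) (g t.succ) else 0 := by
  induction m generalizing a x with
  | zero =>
    rw [← (Equiv.funUnique (Fin 1) ι).symm.sum_comp]
    simp [descProd_zero, one_apply, ite_and, eq_comm]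
  | succ m ih =>
    calc descProd M a (m + 1) x y
        = ∑ g : Fin (m + 1) → ι, if g (Fin.last m) = y then
            M a x (g 0) * ∏ t : Fin m, M (a - 1 - (t : ℕ)) (g t.castSucc) (g t.succ)
          else 0 := by
          simp_rw [descProd_succ, mul_apply, ih, mul_sum, mul_ite, mul_zero]
          rw [sum_comm]
          simp [ite_and]
      _ = _ := by
          conv_rhs => rw [← (Fin.consEquiv fun _ => ι).sum_comp, Fintype.sum_prod_type]
          simp [Fin.prod_univ_succ, ite_and, sub_sub, add_comm]

theorem prod_ofFn_eq_descProd (M : Fin n → Matrix ι ι R) (a : Fin n) (m : ℕ) :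
    (List.ofFn fun k : Fin m => M (a - Fin.ofNat n k)).prod = descProd M a m := by
  induction m generalizing a with
  | zero => rfl
  | succ m ih =>
    rw [List.ofFn_succ, List.prod_cons, descProd_succ, ← ih]
    simp [Fin.ofNat_eq_cast, sub_sub, add_comm]

theorem trace_descProd (M : Fin n → Matrix ι ι R) (a : Fin n) :
    trace (descProd M a n) = cycleSum M := by
  obtain ⟨m, rfl⟩ := Nat.exists_eq_succ_of_ne_zero (NeZero.ne n)
  calc trace (descProd M a (m + 1))
      = ∑ g : Fin (m + 2) → ι, if g (Fin.last (m + 1)) = g 0 then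
          ∏ t : Fin (m + 1), M (a - t) (g t.castSucc) (g t.succ) else 0 := by
        simp_rw [trace, Matrix.diag, descProd_apply, Fin.cast_val_eq_self]
        rw [sum_comm]
        simp [ite_and, eq_comm]
    _ = ∑ ℓ : Fin (m + 1) → ι, ∏ t, M (a - t) (ℓ t) (ℓ (t + 1)) := by
        rw [← (Fin.snocEquiv fun _ => ι).sum_comp, Fintype.sum_prod_type, sum_comm]
        simp [Fin.snocEquiv, Fin.snoc_zero_succ]
    _ = cycleSum M := by
        rw [cycleSum, ← (Equiv.arrowCongr (Equiv.subLeft (a + 1)) (Equiv.refl ι)).sum_comp]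
        refine sum_congr rfl fun ℓ _ => ?_
        rw [← (Equiv.subLeft a).prod_comp]
        refine prod_congr rfl fun t _ => ?_
        simp only [Equiv.subLeft_apply, sub_sub_cancel, Equiv.arrowCongr_apply, Equiv.coe_refl,
          Function.comp_apply, Equiv.subLeft_symm_apply, id_eq]
        congr 2 <;> ring

theorem trace_descProd_update_update (M : Fin n → Matrix ι ι R) (a : Fin n)
    (A B : Matrix ι ι R) {m₁ m₂ : ℕ} (h : m₁ + m₂ + 2 = n) :
    trace (descProd (update (update M a A) (a - (m₁ + 1 : ℕ)) B) a n)
      = trace (A * descProd M (a - 1) m₁ * B * descProd M (a - (m₁ + 2 : ℕ)) m₂) := by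
  set W := update (update M a A) (a - (m₁ + 1 : ℕ)) B with hWdef
  have hne : a - (m₁ + 1 : ℕ) ≠ a := by
    simpa using (Fin.sub_natCast_eq_sub_natCast_iff a (i := m₁ + 1) (i' := 0) (by omega)
      (by omega)).not.2 (by omega)
  have hW : ∀ k < n, k ≠ 0 → k ≠ m₁ + 1 → W (a - k) = M (a - k) := by
    intro k hk hk₀ hk₁
    rw [hWdef, update_of_ne ((Fin.sub_natCast_eq_sub_natCast_iff a hk (by omega)).not.2 hk₁),
      update_of_ne (by simpa using (Fin.sub_natCast_eq_sub_natCast_iff a hk (i' := 0)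
        (by omega)).not.2 hk₀)]
  have hsplit : descProd W a n = W a * descProd W (a - 1) m₁ * W (a - (m₁ + 1 : ℕ))
      * descProd W (a - (m₁ + 2 : ℕ)) m₂ := by
    rw [congrArg (descProd W a) (show n = 1 + m₁ + 1 + m₂ by omega), descProd_add, descProd_add,
      descProd_add, descProd_one, descProd_one]
    push_cast
    rw [add_comm 1 (m₁ : Fin n), add_assoc, one_add_one_eq_two]
  have hseg₁ : descProd W (a - 1) m₁ = descProd M (a - 1) m₁ :=
    descProd_congr fun i hi => by
      simpa [sub_sub, add_comm] using hW (1 + i) (by omega) (by omega) (by omega)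
  have hseg₂ : descProd W (a - (m₁ + 2 : ℕ)) m₂ = descProd M (a - (m₁ + 2 : ℕ)) m₂ :=
    descProd_congr fun i hi => by
      simpa [sub_sub, add_comm, add_assoc] using hW (m₁ + 2 + i) (by omega) (by omega) (by omega)
  show trace (descProd W a n) = _
  rw [hsplit, hseg₁, hseg₂, hWdef, update_self, update_of_ne hne.symm, update_self]

end DescProd

section IMM

variable {q n : ℕ}

noncomputable def varMat (α : Fin n) :
    Matrix (Fin q) (Fin q) (MvPolynomial (Fin n × Fin q × Fin q) ℂ) :=
  Matrix.of fun a b => X (α, a, b)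

theorem IMM_eq_cycleSum [NeZero n] : IMM q n = cycleSum varMat := rfl

theorem pderiv_varMat_of_ne {α γ : Fin n} (h : γ ≠ α) (j k a b : Fin q) :
    pderiv (α, j, k) (varMat γ a b) = 0 :=
  pderiv_X_of_ne fun he => h (Prod.ext_iff.1 he).1

theorem map_pderiv_varMat (α : Fin n) (j k : Fin q) :
    (varMat α).map (pderiv (α, j, k)) = single j k 1 := by
  ext a b
  simp [varMat, pderiv_X, Pi.single_apply, single_apply, eq_comm]

theorem map_pderiv_single (i : Fin n × Fin q × Fin q) (j k : Fin q) :
    (single j k 1 : Matrix (Fin q) (Fin q) (MvPolynomial (Fin n × Fin q × Fin q) ℂ)).map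
      (pderiv i) = 0 := by
  ext a b
  simp [single_apply, apply_ite]

theorem pderiv_IMM [NeZero n] (α : Fin n) (j k : Fin q) :
    pderiv (α, j, k) (IMM q n) = cycleSum (update varMat α (single j k 1)) := by
  rw [IMM_eq_cycleSum, Derivation.map_cycleSum _ _ α fun γ hγ => pderiv_varMat_of_ne hγ j k,
    map_pderiv_varMat]

theorem pderiv_pderiv_IMM_self [NeZero n] (α : Fin n) (j k r s : Fin q) :
    pderiv (α, r, s) (pderiv (α, j, k) (IMM q n)) = 0 := by
  rw [pderiv_IMM, Derivation.map_cycleSum _ _ α, update_self, map_pderiv_single, update_idem,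
    cycleSum_update_zero]
  intro γ hγ
  simpa [update_of_ne hγ] using pderiv_varMat_of_ne hγ r s

theorem pderiv_pderiv_IMM_of_ne [NeZero n] {α β : Fin n} (h : β ≠ α) (j k r s : Fin q) :
    pderiv (β, r, s) (pderiv (α, j, k) (IMM q n))
      = cycleSum (update (update varMat α (single j k 1)) β (single r s 1)) := by
  rw [pderiv_IMM, Derivation.map_cycleSum _ _ β, update_of_ne h, map_pderiv_varMat]
  intro γ hγ a b
  rcases eq_or_ne γ α with rfl | hγα
  · simpa using congrFun₂ (map_pderiv_single (β, r, s) j k) a b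
  · rw [update_of_ne hγα]
    exact pderiv_varMat_of_ne hγ r s a b

theorem map_eval_varMat (v : Fin n × Fin q × Fin q → ℂ) (γ : Fin n) :
    (varMat γ).map (eval v) = toMat v γ := by
  ext a b
  simp [varMat, toMat]

theorem eval_pderiv_pderiv_IMM_of_ne [NeZero n] {α β : Fin n} (h : β ≠ α) (j k r s : Fin q)
    (v : Fin n × Fin q × Fin q → ℂ) :
    MvPolynomial.eval v (pderiv (β, r, s) (pderiv (α, j, k) (IMM q n)))
      = cycleSum (update (update (toMat v) α (single j k 1)) β (single r s 1)) := by
  rw [pderiv_pderiv_IMM_of_ne h, RingHom.map_cycleSum]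
  congr 1
  ext γ : 1
  simp only [apply_update (fun _ N => Matrix.map N (MvPolynomial.eval v)), map_eval_varMat]
  simp

end IMM

section Segments

variable {q n : ℕ} [NeZero n]

theorem segProd_eq_descProd (M : Fin n → Matrix (Fin q) (Fin q) ℂ) {a b : Fin n} {m : ℕ}
    (hm : m < n) (h : a - b = m) : segProd n M a b = descProd M a (m + 1) := by
  rw [segProd, h, Fin.val_cast_of_lt hm, prod_ofFn_eq_descProd]

theorem eval_pderiv_pderiv_IMM_sub (v : Fin n × Fin q × Fin q → ℂ) (α : Fin n)
    (j k r s : Fin q) {m₁ m₂ : ℕ} (h : m₁ + m₂ + 2 = n) :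
    MvPolynomial.eval v (pderiv (α - (m₁ + 1 : ℕ), r, s) (pderiv (α, j, k) (IMM q n)))
      = descProd (toMat v) (α - 1) m₁ k r
        * descProd (toMat v) (α - (m₁ + 2 : ℕ)) m₂ s j := by
  have hne : α - (m₁ + 1 : ℕ) ≠ α := by
    simpa using (Fin.sub_natCast_eq_sub_natCast_iff α (i := m₁ + 1) (i' := 0) (by omega)
      (by omega)).not.2 (by omega)
  rw [eval_pderiv_pderiv_IMM_of_ne hne, ← trace_descProd _ α,
    trace_descProd_update_update _ _ _ _ h, single_mul_mul_single, trace_single_mul]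
  simp

end Segments

/-- the second-order partial derivative
`∂² IMM_q^n / ∂(x_β)^r_s ∂(x_α)^j_k` equals: `0` if `β = α`; `0` if `β = α-1, k ≠ r`;
`0` if `β = α+1, s ≠ j`; the `(s,j)`-entry of `X_{α-2}⋯X_1Xₙ⋯X_{α+1}` if `β = α-1, k = r`;
the `(k,r)`-entry of `X_{α-1}⋯X_1Xₙ⋯X_{α+2}` if `β = α+1, s = j`; and
`(X_{α-1}⋯X_{β+1})^k_r ⬝ (X_{β-1}⋯X_{α+1})^s_j` if `β ∉ {α, α±1}`.
(Here `(x_α)^i_j` is the `(i,j)`-entry of `X_α` and `(Y)^i_j` the `(i,j)`-entry of `Y`.) -/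
theorem stmt_11 (q n : ℕ) (hn : 3 ≤ n) [NeZero n] (α β : Fin n) (j k r s : Fin q)
    (v : Fin n × Fin q × Fin q → ℂ) :
    MvPolynomial.eval v
        (MvPolynomial.pderiv (β, r, s) (MvPolynomial.pderiv (α, j, k) (IMM q n)))
      = if β = α then 0
        else if β = α - 1 then
          (if k = r then segProd n (toMat v) (α - 2) (α + 1) s j else 0)
        else if β = α + 1 then
          (if s = j then segProd n (toMat v) (α - 1) (α + 2) k r else 0)
        else segProd n (toMat v) (α - 1) (β + 1) k r
              * segProd n (toMat v) (β - 1) (α + 1) s j := by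
  rcases eq_or_ne β α with rfl | hβα
  · rw [if_pos rfl, pderiv_pderiv_IMM_self, map_zero]
  obtain ⟨m₁, m₂, hm, rfl⟩ := Fin.exists_eq_sub_natCast_succ hβα
  have hsum : (m₁ : Fin n) + m₂ + 2 = 0 := by
    simpa using congrArg (Nat.cast : ℕ → Fin n) hm
  have h₁ : α - (m₁ + 1 : ℕ) = α - 1 ↔ m₁ = 0 := by
    simpa using
      Fin.sub_natCast_eq_sub_natCast_iff α (i := m₁ + 1) (i' := 1) (by omega) (by omega)
  have h₂ : α - (m₁ + 1 : ℕ) = α + 1 ↔ m₂ = 0 := by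
    rw [show α + 1 = α - (m₁ + m₂ + 1 : ℕ) by push_cast; linear_combination hsum,
      Fin.sub_natCast_eq_sub_natCast_iff α (by omega) (by omega)]
    omega
  rw [if_neg hβα, eval_pderiv_pderiv_IMM_sub v α j k r s hm]
  rcases Nat.eq_zero_or_pos m₁ with rfl | hm₁
  · obtain ⟨m, rfl⟩ := Nat.exists_eq_add_one_of_ne_zero (by omega : m₂ ≠ 0)
    rw [if_pos (h₁.2 rfl), segProd_eq_descProd _ (m := m) (by omega)
      (by push_cast at hsum ⊢; linear_combination -hsum)]
    simp [descProd_zero, one_apply]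
  rcases Nat.eq_zero_or_pos m₂ with rfl | hm₂
  · obtain ⟨m, rfl⟩ := Nat.exists_eq_add_one_of_ne_zero (by omega : m₁ ≠ 0)
    rw [if_neg (mt h₁.1 (by omega)), if_pos (h₂.2 rfl),
      segProd_eq_descProd _ (m := m) (by omega)
        (by push_cast at hsum ⊢; linear_combination -hsum)]
    simp [descProd_zero, one_apply]
  obtain ⟨a, rfl⟩ := Nat.exists_eq_add_one_of_ne_zero (by omega : m₁ ≠ 0)
  obtain ⟨b, rfl⟩ := Nat.exists_eq_add_one_of_ne_zero (by omega : m₂ ≠ 0)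
  rw [if_neg (mt h₁.1 (by omega)), if_neg (mt h₂.1 (by omega)),
    segProd_eq_descProd _ (m := a) (by omega) (by push_cast; ring),
    segProd_eq_descProd _ (m := b) (by omega) (by push_cast at hsum ⊢; linear_combination -hsum),
    show α - ((a + 1 + 2 : ℕ) : Fin n) = α - ((a + 1 + 1 : ℕ) : Fin n) - 1 by push_cast; ring]
end

section
/- Fix 0 ≤ r ≤ q. Let Z̃ = {(X,Y,E) ∈ Mat_q(ℂ)² × Gr(r,ℂ^q) : Im(X) ⊆ E ⊆ ker(Y)}. Then the projection (X,Y,E) ↦ E makes Z̃ a vector bundle over the Grassmannian Gr(r,ℂ^q) with fibers of dimension q², and the projection (X,Y,E) ↦ (X,Y) maps Z̃ surjectively onto Z = {(X,Y) : rank X ≤ r, rank Y ≤ q−r, YX = 0}, bijectively over the open locus where rank X = r and rank Y = q−r. -/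
/-!
For a fixed `E`, both `Im X ⊆ E` and `E ⊆ ker Y` are linear conditions, and the pairs
satisfying them are exactly `(ι ∘ f, g ∘ π)` with `f : ℂ^q → E` and `g : ℂ^q / E → ℂ^q`,
so the fiber has dimension `q r + (q - r) q = q²`. If `YX = 0` then `Im X ⊆ ker Y`, and the
rank bounds say `dim Im X ≤ r ≤ dim ker Y`, so an `r`-dimensional `E` can be squeezed in
between by adding vectors one at a time. When `rank X = r` the only such `E` is `Im X`.
-/

open Matrix Module LinearMap

namespace Submodule

variable {K U V W : Type*} [Field K] [AddCommGroup U] [Module K U] [AddCommGroup V] [Module K V]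
  [AddCommGroup W] [Module K W]

theorem exists_finrank_eq_between [FiniteDimensional K V] {p q : Submodule K V} (hpq : p ≤ q)
    {n : ℕ} (hp : finrank K p ≤ n) (hq : n ≤ finrank K q) :
    ∃ E : Submodule K V, p ≤ E ∧ E ≤ q ∧ finrank K E = n := by
  induction n, hp using Nat.le_induction with
  | base => exact ⟨p, le_rfl, hpq, rfl⟩
  | succ n _ ih =>
    obtain ⟨E, hpE, hEq, hE⟩ := ih (by omega)
    obtain ⟨x, hxq, hxE⟩ := SetLike.exists_of_lt (lt_of_le_of_ne hEq (by rintro rfl; omega))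
    refine ⟨E ⊔ span K {x}, hpE.trans le_sup_left,
      sup_le hEq ((span_singleton_le_iff_mem _ _).mpr hxq), ?_⟩
    rw [finrank_sup_span_singleton hxE, hE]

theorem mem_range_compRight_subtype_iff (E : Submodule K V) {f : U →ₗ[K] V} :
    f ∈ range (compRight K E.subtype : (U →ₗ[K] E) →ₗ[K] _) ↔ range f ≤ E := by
  constructor
  · rintro ⟨g, rfl⟩
    exact (range_comp_le_range g E.subtype).trans_eq E.range_subtype
  · intro hf
    exact ⟨codRestrict E f fun u => hf (mem_range_self f u), rfl⟩

theorem mem_range_lcomp_mkQ_iff (E : Submodule K V) {g : V →ₗ[K] W} :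
    g ∈ range (lcomp K W E.mkQ) ↔ E ≤ ker g := by
  constructor
  · rintro ⟨h, rfl⟩
    exact E.ker_mkQ.symm.trans_le (ker_le_ker_comp E.mkQ h)
  · intro hg
    exact ⟨E.liftQ g hg, E.liftQ_mkQ g hg⟩

variable (U W) in
def sandwichPairs (E : Submodule K V) : Submodule K ((U →ₗ[K] V) × (V →ₗ[K] W)) :=
  range ((compRight K E.subtype : (U →ₗ[K] E) →ₗ[K] _).prodMap (lcomp K W E.mkQ))

theorem mem_sandwichPairs {E : Submodule K V} {p : (U →ₗ[K] V) × (V →ₗ[K] W)} :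
    p ∈ E.sandwichPairs U W ↔ range p.1 ≤ E ∧ E ≤ ker p.2 := by
  rw [← mem_range_compRight_subtype_iff, ← mem_range_lcomp_mkQ_iff]
  constructor
  · rintro ⟨⟨f, g⟩, rfl⟩
    exact ⟨mem_range_self _ f, mem_range_self _ g⟩
  · rintro ⟨⟨f, hf⟩, ⟨g, hg⟩⟩
    exact ⟨(f, g), Prod.ext hf hg⟩

theorem finrank_sandwichPairs [FiniteDimensional K U] [FiniteDimensional K V]
    [FiniteDimensional K W] (E : Submodule K V) :
    finrank K (E.sandwichPairs U W) =
      finrank K U * finrank K E + (finrank K V - finrank K E) * finrank K W := by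
  have hsub : Function.Injective (compRight K E.subtype : (U →ₗ[K] E) →ₗ[K] _) :=
    fun _ _ h => (cancel_left E.injective_subtype).mp h
  have hmkQ : Function.Injective (lcomp K W E.mkQ) := fun _ _ h =>
    (cancel_right E.mkQ_surjective).mp h
  rw [sandwichPairs, finrank_range_of_inj (by rw [coe_prodMap]; exact hsub.prodMap hmkQ),
    finrank_prod, finrank_linearMap, finrank_linearMap, finrank_quotient]

end Submodule

namespace LinearMap

variable {K U V W : Type*} [Field K] [AddCommGroup U] [Module K U] [AddCommGroup V] [Module K V]
  [AddCommGroup W] [Module K W] [FiniteDimensional K V]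

theorem exists_finrank_eq_range_le_le_ker_iff (f : U →ₗ[K] V) (g : V →ₗ[K] W) {r : ℕ}
    (hr : r ≤ finrank K V) :
    (finrank K (range f) ≤ r ∧ finrank K (range g) ≤ finrank K V - r ∧ g ∘ₗ f = 0) ↔
      ∃ E : Submodule K V, finrank K E = r ∧ range f ≤ E ∧ E ≤ ker g := by
  have hg := finrank_range_add_finrank_ker g
  constructor
  · rintro ⟨hf, hgr, hgf⟩
    obtain ⟨E, hfE, hEg, hE⟩ :=
      Submodule.exists_finrank_eq_between (range_le_ker_iff.mpr hgf) hf (by omega)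
    exact ⟨E, hE, hfE, hEg⟩
  · rintro ⟨E, rfl, hfE, hEg⟩
    have := Submodule.finrank_mono hEg
    exact ⟨Submodule.finrank_mono hfE, by omega, range_le_ker_iff.mp (hfE.trans hEg)⟩

theorem existsUnique_finrank_eq_range_le_le_ker (f : U →ₗ[K] V) (g : V →ₗ[K] W)
    (hgf : g ∘ₗ f = 0) :
    ∃! E : Submodule K V, finrank K E = finrank K (range f) ∧ range f ≤ E ∧ E ≤ ker g :=
  ⟨range f, ⟨rfl, le_rfl, range_le_ker_iff.mpr hgf⟩, fun _ ⟨hE, hfE, _⟩ =>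
    (Submodule.eq_of_le_of_finrank_eq hfE hE.symm).symm⟩

end LinearMap

theorem Matrix.mul_eq_zero_iff_mulVecLin_comp_eq_zero {m n o K : Type*} [Fintype m] [Fintype n]
    [DecidableEq n] [CommSemiring K] (Y : Matrix o m K) (X : Matrix m n K) :
    Y * X = 0 ↔ Y.mulVecLin ∘ₗ X.mulVecLin = 0 := by
  rw [← mulVecLin_mul, ← toLin'_apply', map_eq_zero_iff _ toLin'.injective]

/-- let
`Z̃ = {(X,Y,E) ∈ Mat_q² × Gr(r,ℂ^q) : Im X ⊆ E ⊆ ker Y}`.  Then: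
(1) over each point `E` of the Grassmannian, the fiber of `Z̃ → Gr(r,ℂ^q)` is a
linear subspace of `Mat_q × Mat_q` of dimension `q²` (so `Z̃` is a vector bundle with
`q²`-dimensional fibers);
(2) the projection `(X,Y,E) ↦ (X,Y)` maps `Z̃` surjectively onto
`Z = {(X,Y) : rk X ≤ r, rk Y ≤ q-r, YX = 0}`, i.e. `(X,Y) ∈ Z` iff some `E` works;
(3) it is bijective over the locus `rk X = r, rk Y = q-r`: there the `E` is unique. -/
theorem stmt_14 (q r : ℕ) (hr : r ≤ q) :
    (∀ E : Submodule ℂ (Fin q → ℂ), Module.finrank ℂ E = r →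
      ∃ S : Submodule ℂ (Matrix (Fin q) (Fin q) ℂ × Matrix (Fin q) (Fin q) ℂ),
        (S : Set (Matrix (Fin q) (Fin q) ℂ × Matrix (Fin q) (Fin q) ℂ))
            = {p | LinearMap.range p.1.mulVecLin ≤ E ∧ E ≤ LinearMap.ker p.2.mulVecLin} ∧
        Module.finrank ℂ S = q ^ 2) ∧
    (∀ X Y : Matrix (Fin q) (Fin q) ℂ,
      (X.rank ≤ r ∧ Y.rank ≤ q - r ∧ Y * X = 0) ↔
        ∃ E : Submodule ℂ (Fin q → ℂ), Module.finrank ℂ E = r ∧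
          LinearMap.range X.mulVecLin ≤ E ∧ E ≤ LinearMap.ker Y.mulVecLin) ∧
    (∀ X Y : Matrix (Fin q) (Fin q) ℂ, X.rank = r → Y.rank = q - r → Y * X = 0 →
      ∃! E : Submodule ℂ (Fin q → ℂ), Module.finrank ℂ E = r ∧
        LinearMap.range X.mulVecLin ≤ E ∧ E ≤ LinearMap.ker Y.mulVecLin) := by
  have hq : finrank ℂ (Fin q → ℂ) = q := finrank_fin_fun ℂ
  refine ⟨fun E hE => ?_, fun X Y => ?_, fun X Y hX _ hYX => ?_⟩
  · let e : Matrix (Fin q) (Fin q) ℂ ≃ₗ[ℂ] _ := toLin'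
    refine ⟨(E.sandwichPairs _ _).comap (e.prodCongr e).toLinearMap, ?_, ?_⟩
    · ext p
      exact Submodule.mem_sandwichPairs
    · rw [Submodule.comap_equiv_eq_map_symm, LinearEquiv.finrank_map_eq,
        Submodule.finrank_sandwichPairs, hE, hq, mul_comm q r, ← add_mul,
        Nat.add_sub_cancel' hr, sq]
  · have h := LinearMap.exists_finrank_eq_range_le_le_ker_iff X.mulVecLin Y.mulVecLin (hq ▸ hr)
    rw [hq] at h
    rwa [mul_eq_zero_iff_mulVecLin_comp_eq_zero]
  · rw [← hX]
    exact LinearMap.existsUnique_finrank_eq_range_le_le_ker _ _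
      ((mul_eq_zero_iff_mulVecLin_comp_eq_zero Y X).mp hYX)
end

section
/- The common zero locus W of all partial derivatives of order n−2 of IMM_q^n equals the set of tuples (X_1,...,X_n) ∈ (Mat_q(ℂ))^n such that there exists α with X_β = 0 for all β ∉ {α−1, α} and X_α X_{α−1} = 0. -/
open MvPolynomial

/-!
Every monomial of `IMM q n` is squarefree: it picks the entry `(ℓ (δ + 1), ℓ δ)` of each `X_δ`
along an index cycle `ℓ : Fin n → Fin q`. Differentiating along `n - 2` variables therefore
either kills every monomial, or fixes the indices `ℓ δ, ℓ (δ + 1)` at all positions `δ` outside a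
pair `P` and leaves, summed over the cycles with these indices, the product of the two entries
at the positions of `P`. For `P = {α - 1, α}` exactly `ℓ α` is free and the value is an entry of
`X_α X_{α-1}`; for two non-adjacent positions `β, γ` the cycle is determined and the value is
`(X_β)_{ab} (X_γ)_{cd}` for arbitrary `a, b, c, d`. So the point lies in the zero locus iff all
products `X_α X_{α-1}` vanish and no two non-adjacent `X_β, X_γ` are both nonzero; for `n ≥ 4`
the latter confines the nonzero matrices to two consecutive positions.
-/

open Finset Function

section IteratedPDeriv

variable {R σ : Type*} [CommSemiring R]

lemma foldl_pderiv_zero (L : List σ) :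
    L.foldl (fun p s => pderiv s p) (0 : MvPolynomial σ R) = 0 := by
  induction L with
  | nil => rfl
  | cons s L ih => rwa [List.foldl_cons, map_zero]

lemma foldl_pderiv_sum {ι : Type*} (L : List σ) (t : Finset ι) (f : ι → MvPolynomial σ R) :
    L.foldl (fun p s => pderiv s p) (∑ a ∈ t, f a) =
      ∑ a ∈ t, L.foldl (fun p s => pderiv s p) (f a) := by
  induction L generalizing f with
  | nil => rfl
  | cons s L ih => simp only [List.foldl_cons, map_sum, ih]

lemma pderiv_prod_X_of_notMem {i : σ} {S : Finset σ} (hi : i ∉ S) :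
    pderiv i (∏ s ∈ S, (X s : MvPolynomial σ R)) = 0 :=
  prod_induction _ (fun p => pderiv i p = 0)
    (fun p p' hp hp' => by rw [pderiv_mul, hp, hp', mul_zero, zero_mul, add_zero])
    (Derivation.map_one_eq_zero _) (fun s hs => pderiv_X_of_ne (ne_of_mem_of_not_mem hs hi))

variable [DecidableEq σ]

lemma pderiv_prod_X_of_mem {i : σ} {S : Finset σ} (hi : i ∈ S) :
    pderiv i (∏ s ∈ S, (X s : MvPolynomial σ R)) = ∏ s ∈ S.erase i, X s := by
  rw [← mul_prod_erase S _ hi, pderiv_mul, pderiv_X_self,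
    pderiv_prod_X_of_notMem (notMem_erase i S), one_mul, mul_zero, add_zero]

lemma foldl_pderiv_prod_X (L : List σ) (S : Finset σ) :
    L.foldl (fun p s => pderiv s p) (∏ s ∈ S, (X s : MvPolynomial σ R)) =
      if L.Nodup ∧ L.toFinset ⊆ S then ∏ s ∈ S \ L.toFinset, X s else 0 := by
  induction L generalizing S with
  | nil => simp
  | cons i L ih =>
    rw [List.foldl_cons]
    by_cases hi : i ∈ S
    · rw [pderiv_prod_X_of_mem hi, ih, List.toFinset_cons, sdiff_insert, erase_sdiff_comm]
      refine if_congr ?_ rfl rfl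
      simp only [List.nodup_cons, subset_erase, insert_subset_iff, List.mem_toFinset, hi, true_and]
      tauto
    · rw [pderiv_prod_X_of_notMem hi, foldl_pderiv_zero, if_neg]
      simp [insert_subset_iff, hi]

end IteratedPDeriv

namespace Fin

open Fin.CommRing

lemma card_compl_pair {n : ℕ} {a b : Fin n} (hab : a ≠ b) :
    #({a, b} : Finset (Fin n))ᶜ = n - 2 := by
  rw [card_compl, Fintype.card_fin, card_pair hab]

variable {n : ℕ} [NeZero n]

lemma natCast_ne_zero_of_lt {k : ℕ} (hk : 0 < k) (hkn : k < n) : (k : Fin n) ≠ 0 := by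
  rw [Ne, natCast_eq_zero]
  exact fun h => absurd (Nat.le_of_dvd hk h) (by omega)

lemma add_one_ne_self (hn : 2 ≤ n) (a : Fin n) : a + 1 ≠ a := fun h =>
  natCast_ne_zero_of_lt Nat.one_pos (show 1 < n by omega) (by push_cast; linear_combination h)

lemma sub_one_ne_self (hn : 2 ≤ n) (a : Fin n) : a - 1 ≠ a := fun h =>
  natCast_ne_zero_of_lt Nat.one_pos (show 1 < n by omega) (by push_cast; linear_combination -h)

lemma sub_one_ne_add_one (hn : 3 ≤ n) (a : Fin n) : a - 1 ≠ a + 1 := fun h =>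
  natCast_ne_zero_of_lt Nat.two_pos (show 2 < n by omega) (by push_cast; linear_combination -h)

lemma sub_one_sub_one_ne_self (hn : 3 ≤ n) (a : Fin n) : a - 1 - 1 ≠ a := fun h =>
  natCast_ne_zero_of_lt Nat.two_pos (show 2 < n by omega) (by push_cast; linear_combination -h)

lemma sub_one_ne_add_one_add_one (hn : 4 ≤ n) (a : Fin n) : a - 1 ≠ a + 1 + 1 := fun h =>
  natCast_ne_zero_of_lt (by norm_num) (show 3 < n by omega) (by push_cast; linear_combination -h)

lemma exists_eq_zero_off_consecutive_pair {M : Type*} [Zero M] (hn : 4 ≤ n) (x : Fin n → M)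
    (h : ∀ β γ, β ≠ γ → γ ≠ β + 1 → β ≠ γ + 1 → x β = 0 ∨ x γ = 0) :
    ∃ α, ∀ β, β ≠ α - 1 → β ≠ α → x β = 0 := by
  by_cases hzero : ∀ β, x β = 0
  · exact ⟨0, fun β _ _ => hzero β⟩
  obtain ⟨β₀, hβ₀⟩ := not_forall.mp hzero
  have hadj : ∀ β, x β ≠ 0 → β ≠ β₀ → β = β₀ + 1 ∨ β = β₀ - 1 := by
    intro β hβ hne
    by_contra hfar
    push Not at hfar
    exact (h β β₀ hne (fun e => hfar.2 (eq_sub_of_add_eq e.symm)) hfar.1).elim hβ hβ₀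
  by_cases hnext : x (β₀ + 1) = 0
  · refine ⟨β₀, fun β hβ₁ hβ₂ => by_contra fun hβ => ?_⟩
    rcases hadj β hβ hβ₂ with rfl | rfl
    exacts [hβ hnext, hβ₁ rfl]
  · refine ⟨β₀ + 1, fun β hβ₁ hβ₂ => by_contra fun hβ => ?_⟩
    rw [add_sub_cancel_right] at hβ₁
    rcases hadj β hβ hβ₁ with rfl | rfl
    · exact hβ₂ rfl
    · refine (h (β₀ - 1) (β₀ + 1) (sub_one_ne_add_one (by omega) β₀) ?_
        (sub_one_ne_add_one_add_one hn β₀)).elim hβ hnext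
      rw [sub_add_cancel]
      exact add_one_ne_self (by omega) β₀

end Fin

lemma sum_filter_eq_sum_update {ι κ M : Type*} [Fintype ι] [DecidableEq ι] [Fintype κ]
    [DecidableEq κ] [AddCommMonoid M] {p : (ι → κ) → Prop} [DecidablePred p] {a : ι}
    {g : ι → κ} (hp : ∀ ℓ, p ℓ ↔ ∀ i ≠ a, ℓ i = g i) (f : (ι → κ) → M) :
    ∑ ℓ with p ℓ, f ℓ = ∑ k, f (update g a k) := by
  rw [← sum_image (s := univ) (f := f) (update_injective g a).injOn]
  congr 1
  ext ℓ
  simp only [mem_filter, mem_univ, true_and, mem_image, hp]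
  constructor
  · intro h
    refine ⟨ℓ a, funext fun i => ?_⟩
    by_cases hi : i = a
    · rw [hi, update_self]
    · rw [update_of_ne hi, h i hi]
  · rintro ⟨k, rfl⟩ i hi
    exact update_of_ne hi _ _

lemma Matrix.eq_zero_or_eq_zero_of_forall_mul_apply_eq_zero {m n m' n' R : Type*}
    [MulZeroClass R] [NoZeroDivisors R] {A : Matrix m n R} {B : Matrix m' n' R}
    (h : ∀ i j k l, A i j * B k l = 0) : A = 0 ∨ B = 0 := by
  by_contra! hAB
  obtain ⟨i, j, hij⟩ : ∃ i j, A i j ≠ 0 := by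
    by_contra! hA
    exact hAB.1 (Matrix.ext hA)
  obtain ⟨k, l, hkl⟩ : ∃ k l, B k l ≠ 0 := by
    by_contra! hB
    exact hAB.2 (Matrix.ext hB)
  exact mul_ne_zero hij hkl (h i j k l)

section IMM

variable {q n : ℕ} [NeZero n] (v : Fin n × Fin q × Fin q → ℂ)

def cycleVar (ℓ : Fin n → Fin q) (δ : Fin n) : Fin n × Fin q × Fin q := (δ, ℓ (δ + 1), ℓ δ)

lemma cycleVar_injective (ℓ : Fin n → Fin q) : Injective (cycleVar ℓ) :=
  fun _ _ h => congrArg Prod.fst h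

lemma IMM_eq_sum_prod_X :
    IMM q n = ∑ ℓ : Fin n → Fin q, ∏ s ∈ univ.image (cycleVar ℓ), X s := by
  simp only [prod_image (cycleVar_injective _).injOn]
  rfl

lemma eval_foldl_pderiv_IMM (L : List (Fin n × Fin q × Fin q)) :
    eval v (L.foldl (fun p s => pderiv s p) (IMM q n)) =
      ∑ ℓ : Fin n → Fin q, if L.Nodup ∧ L.toFinset ⊆ univ.image (cycleVar ℓ) then
        ∏ s ∈ univ.image (cycleVar ℓ) \ L.toFinset, v s else 0 := by
  simp only [IMM_eq_sum_prod_X, foldl_pderiv_sum, foldl_pderiv_prod_X, map_sum, apply_ite,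
    map_prod, eval_X, map_zero]

lemma eval_foldl_pderiv_IMM_eq_zero {L : List (Fin n × Fin q × Fin q)}
    (hL : ¬(L.Nodup ∧ ∃ ℓ₁, L.toFinset ⊆ univ.image (cycleVar ℓ₁))) :
    eval v (L.foldl (fun p s => pderiv s p) (IMM q n)) = 0 := by
  rw [eval_foldl_pderiv_IMM]
  exact sum_eq_zero fun ℓ _ => if_neg fun h => hL ⟨h.1, ℓ, h.2⟩

lemma image_fst_image_cycleVar {T : Finset (Fin n × Fin q × Fin q)} {ℓ : Fin n → Fin q}
    (hT : T ⊆ univ.image (cycleVar ℓ)) : (T.image Prod.fst).image (cycleVar ℓ) = T := by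
  have hfix : Set.EqOn (cycleVar ℓ ∘ Prod.fst) id T := fun t ht => by
    obtain ⟨δ, -, rfl⟩ := mem_image.mp (hT ht)
    rfl
  rw [image_image, image_congr hfix, image_id]

lemma image_cycleVar_subset_iff (P : Finset (Fin n)) (ℓ₁ ℓ : Fin n → Fin q) :
    Pᶜ.image (cycleVar ℓ₁) ⊆ univ.image (cycleVar ℓ) ↔
      ∀ δ ∉ P, cycleVar ℓ δ = cycleVar ℓ₁ δ := by
  constructor
  · intro h δ hδ
    obtain ⟨δ', -, hδ'⟩ := mem_image.mp (h (mem_image_of_mem _ (mem_compl.mpr hδ)))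
    obtain rfl : δ' = δ := congrArg Prod.fst hδ'
    exact hδ'
  · rintro h _ hs
    obtain ⟨δ, hδ, rfl⟩ := mem_image.mp hs
    rw [← h δ (mem_compl.mp hδ)]
    exact mem_image_of_mem _ (mem_univ δ)

lemma eval_foldl_pderiv_IMM_of_toFinset_eq {L : List (Fin n × Fin q × Fin q)} (hL : L.Nodup)
    {P : Finset (Fin n)} {ℓ₁ : Fin n → Fin q} (hLP : L.toFinset = Pᶜ.image (cycleVar ℓ₁)) :
    eval v (L.foldl (fun p s => pderiv s p) (IMM q n)) =
      ∑ ℓ with ∀ δ ∉ P, cycleVar ℓ δ = cycleVar ℓ₁ δ, ∏ δ ∈ P, v (cycleVar ℓ δ) := by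
  rw [eval_foldl_pderiv_IMM, sum_filter]
  refine sum_congr rfl fun ℓ _ => ?_
  simp only [hL, true_and, hLP, image_cycleVar_subset_iff]
  split_ifs with hagree
  · rw [image_congr fun δ hδ => (hagree δ (mem_compl.mp hδ)).symm,
      ← image_sdiff _ _ (cycleVar_injective ℓ), ← compl_eq_univ_sdiff, compl_compl,
      prod_image (cycleVar_injective ℓ).injOn]
  · rfl

lemma forall_cycleVar_eq_iff (P : Finset (Fin n)) (ℓ₁ ℓ : Fin n → Fin q) :
    (∀ δ ∉ P, cycleVar ℓ δ = cycleVar ℓ₁ δ) ↔ ∀ δ, (δ ∉ P ∨ δ - 1 ∉ P) → ℓ δ = ℓ₁ δ := by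
  simp only [cycleVar, Prod.mk.injEq, true_and]
  constructor
  · rintro h δ (hδ | hδ)
    · exact (h δ hδ).2
    · simpa using (h _ hδ).1
  · intro h δ hδ
    exact ⟨h _ (Or.inr (by rwa [add_sub_cancel_right])), h δ (Or.inl hδ)⟩

lemma sum_cycles_agreeing_off_consecutive (hn : 3 ≤ n) (α : Fin n) (ℓ₁ : Fin n → Fin q) :
    ∑ ℓ with ∀ δ ∉ ({α - 1, α} : Finset (Fin n)), cycleVar ℓ δ = cycleVar ℓ₁ δ,
        ∏ δ ∈ {α - 1, α}, v (cycleVar ℓ δ) =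
      (toMat v α * toMat v (α - 1)) (ℓ₁ (α + 1)) (ℓ₁ (α - 1)) := by
  have hα : α - 1 ≠ α := Fin.sub_one_ne_self (by omega) α
  have hfree (ℓ : Fin n → Fin q) : (∀ δ ∉ ({α - 1, α} : Finset (Fin n)),
      cycleVar ℓ δ = cycleVar ℓ₁ δ) ↔ ∀ δ ≠ α, ℓ δ = ℓ₁ δ := by
    rw [forall_cycleVar_eq_iff]
    refine forall_congr' fun δ => imp_congr_left ⟨?_, fun hδ => ?_⟩
    · rintro h rfl
      simp at h
    · by_cases h : δ = α - 1
      · subst h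
        simp [Fin.sub_one_ne_self (show 2 ≤ n by omega), Fin.sub_one_sub_one_ne_self hn]
      · simp [h, hδ]
  calc _ = ∑ k, v (α - 1, k, ℓ₁ (α - 1)) * v (α, ℓ₁ (α + 1), k) := by
        rw [sum_filter_eq_sum_update hfree]
        refine sum_congr rfl fun k _ => ?_
        rw [prod_pair hα]
        simp only [cycleVar, sub_add_cancel, update_self, update_of_ne hα,
          update_of_ne (Fin.add_one_ne_self (by omega) α)]
    _ = _ := by simp only [Matrix.mul_apply, toMat, Matrix.of_apply, mul_comm]

lemma sum_cycles_agreeing_off_nonadjacent {β γ : Fin n} (hne : β ≠ γ) (hγβ : γ ≠ β + 1)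
    (hβγ : β ≠ γ + 1) (ℓ₁ : Fin n → Fin q) :
    ∑ ℓ with ∀ δ ∉ ({β, γ} : Finset (Fin n)), cycleVar ℓ δ = cycleVar ℓ₁ δ,
        ∏ δ ∈ {β, γ}, v (cycleVar ℓ δ) =
      toMat v β (ℓ₁ (β + 1)) (ℓ₁ β) * toMat v γ (ℓ₁ (γ + 1)) (ℓ₁ γ) := by
  have hn : 2 ≤ n := by
    have := Fin.val_ne_of_ne hne
    omega
  have hrigid (ℓ : Fin n → Fin q) : (∀ δ ∉ ({β, γ} : Finset (Fin n)),
      cycleVar ℓ δ = cycleVar ℓ₁ δ) ↔ ℓ = ℓ₁ := by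
    rw [forall_cycleVar_eq_iff, funext_iff]
    refine forall_congr' fun δ => ⟨fun h => h ?_, fun h _ => h⟩
    by_cases hδ : δ ∈ ({β, γ} : Finset (Fin n))
    · right
      simp only [mem_insert, mem_singleton, not_or] at hδ ⊢
      rcases hδ with rfl | rfl
      · exact ⟨Fin.sub_one_ne_self hn δ, fun h => hβγ (eq_add_of_sub_eq h)⟩
      · exact ⟨fun h => hγβ (eq_add_of_sub_eq h), Fin.sub_one_ne_self hn δ⟩
    · exact Or.inl hδ
  rw [sum_congr (filter_congr fun ℓ _ => hrigid ℓ) fun _ _ => rfl, filter_eq',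
    if_pos (mem_univ _), sum_singleton, prod_pair hne]
  rfl

lemma exists_list_eval_foldl_pderiv_IMM (P : Finset (Fin n)) (ℓ₁ : Fin n → Fin q) :
    ∃ L : List (Fin n × Fin q × Fin q), L.length = #Pᶜ ∧
      eval v (L.foldl (fun p s => pderiv s p) (IMM q n)) =
        ∑ ℓ with ∀ δ ∉ P, cycleVar ℓ δ = cycleVar ℓ₁ δ, ∏ δ ∈ P, v (cycleVar ℓ δ) :=
  ⟨(Pᶜ.image (cycleVar ℓ₁)).toList,
    by rw [length_toList, card_image_of_injective _ (cycleVar_injective ℓ₁)],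
    eval_foldl_pderiv_IMM_of_toFinset_eq v (nodup_toList _) (toList_toFinset _)⟩

variable {v}

lemma toMat_mul_toMat_sub_one_eq_zero (hn : 3 ≤ n)
    (hW : ∀ L : List (Fin n × Fin q × Fin q), L.length = n - 2 →
      eval v (L.foldl (fun p s => pderiv s p) (IMM q n)) = 0) (α : Fin n) :
    toMat v α * toMat v (α - 1) = 0 := by
  ext i j
  obtain ⟨L, hL, heval⟩ :=
    exists_list_eval_foldl_pderiv_IMM v {α - 1, α} (update (fun _ => i) (α - 1) j)
  rw [sum_cycles_agreeing_off_consecutive v hn, update_self,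
    update_of_ne (Fin.sub_one_ne_add_one hn α).symm,
    hW L (hL.trans (Fin.card_compl_pair (Fin.sub_one_ne_self (by omega) α)))] at heval
  exact heval.symm

lemma toMat_eq_zero_or_toMat_eq_zero
    (hW : ∀ L : List (Fin n × Fin q × Fin q), L.length = n - 2 →
      eval v (L.foldl (fun p s => pderiv s p) (IMM q n)) = 0)
    {β γ : Fin n} (hne : β ≠ γ) (hγβ : γ ≠ β + 1) (hβγ : β ≠ γ + 1) :
    toMat v β = 0 ∨ toMat v γ = 0 := by
  have hn : 2 ≤ n := by
    have := Fin.val_ne_of_ne hne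
    omega
  refine Matrix.eq_zero_or_eq_zero_of_forall_mul_apply_eq_zero fun a b c d => ?_
  obtain ⟨L, hL, heval⟩ := exists_list_eval_foldl_pderiv_IMM v {β, γ}
    (update (update (update (fun _ => d) (γ + 1) c) β b) (β + 1) a)
  rw [sum_cycles_agreeing_off_nonadjacent v hne hγβ hβγ,
    hW L (hL.trans (Fin.card_compl_pair hne))] at heval
  simpa [update_apply, hne.symm, hγβ, hβγ.symm, (Fin.add_one_ne_self hn _).symm]
    using heval.symm

lemma eval_foldl_pderiv_IMM_eq_zero_of_mul_eq_zero (hn : 3 ≤ n) {α : Fin n}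
    (hsupp : ∀ β : Fin n, β ≠ α - 1 → β ≠ α → toMat v β = 0)
    (hprod : toMat v α * toMat v (α - 1) = 0) {L : List (Fin n × Fin q × Fin q)}
    (hL : L.length = n - 2) : eval v (L.foldl (fun p s => pderiv s p) (IMM q n)) = 0 := by
  by_cases hdiff : L.Nodup ∧ ∃ ℓ₁, L.toFinset ⊆ univ.image (cycleVar ℓ₁)
  swap
  · exact eval_foldl_pderiv_IMM_eq_zero v hdiff
  obtain ⟨hnodup, ℓ₁, hsub⟩ := hdiff
  obtain ⟨P, hLP⟩ : ∃ P : Finset (Fin n), L.toFinset = Pᶜ.image (cycleVar ℓ₁) :=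
    ⟨_, by rw [compl_compl, image_fst_image_cycleVar hsub]⟩
  have hP : #P = 2 := by
    have := card_compl P
    rw [← card_image_of_injective _ (cycleVar_injective ℓ₁), ← hLP,
      List.toFinset_card_of_nodup hnodup, hL, Fintype.card_fin] at this
    omega
  rw [eval_foldl_pderiv_IMM_of_toFinset_eq v hnodup hLP]
  by_cases hPα : P ⊆ {α - 1, α}
  · rw [eq_of_subset_of_card_le hPα (hP ▸ card_le_two),
      sum_cycles_agreeing_off_consecutive v hn, hprod, Matrix.zero_apply]
  · obtain ⟨δ, hδP, hδα⟩ := not_subset.mp hPα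
    simp only [mem_insert, mem_singleton, not_or] at hδα
    refine sum_eq_zero fun ℓ _ => prod_eq_zero hδP ?_
    change toMat v δ _ _ = 0
    rw [hsupp δ hδα.1 hδα.2, Matrix.zero_apply]

end IMM

theorem stmt_17_general (q n : ℕ) (hn : 4 ≤ n) [NeZero n]
    (v : Fin n × Fin q × Fin q → ℂ) :
    (∀ L : List (Fin n × Fin q × Fin q), L.length = n - 2 →
        MvPolynomial.eval v
          (L.foldl (fun p s => MvPolynomial.pderiv s p) (IMM q n)) = 0) ↔
    (∃ α : Fin n, (∀ β : Fin n, β ≠ α - 1 → β ≠ α → toMat v β = 0) ∧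
      toMat v α * toMat v (α - 1) = 0) := by
  constructor
  · intro hW
    obtain ⟨α, hα⟩ := Fin.exists_eq_zero_off_consecutive_pair hn (toMat v)
      fun _ _ => toMat_eq_zero_or_toMat_eq_zero hW
    exact ⟨α, hα, toMat_mul_toMat_sub_one_eq_zero (by omega) hW α⟩
  · rintro ⟨α, hsupp, hprod⟩ L hL
    exact eval_foldl_pderiv_IMM_eq_zero_of_mul_eq_zero (by omega) hsupp hprod hL

/-- a point `(X₁,...,Xₙ)` lies in the common zero locus `W` of all
partial derivatives of order `n-2` of `IMM_q^n` (all iterated partials with respect to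
`n-2` not necessarily distinct variables) if and only if there exists `α` such that
`X_β = 0` for all `β ∉ {α-1, α}` and `X_α X_{α-1} = 0`. -/
theorem stmt_17 (q n : ℕ) (hq : 2 ≤ q) (hn : 4 ≤ n) [NeZero n]
    (v : Fin n × Fin q × Fin q → ℂ) :
    (∀ L : List (Fin n × Fin q × Fin q), L.length = n - 2 →
        MvPolynomial.eval v
          (L.foldl (fun p s => MvPolynomial.pderiv s p) (IMM q n)) = 0) ↔
    (∃ α : Fin n, (∀ β : Fin n, β ≠ α - 1 → β ≠ α → toMat v β = 0) ∧
      toMat v α * toMat v (α - 1) = 0) :=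
  stmt_17_general q n hn v
end
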